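/- For any f, g ∈ S_n and any 1 ≤ k ≤ n, d_K(f,g) ≥ d_K(f|^{[k]}, g|^{[k]}) + Σ_{i=k+1}^{n} |Φ(f)_i − Φ(g)_i|. -/

import Mathlib

open Finset

/-- Kendall's tau distance: minimal number of adjacent transpositions
(in one-line notation, i.e. swaps of values in consecutive positions)
transforming `f` into `g`. -/
noncomputable def kendall {n : ℕ} (f g : Equiv.Perm (Fin n)) : ℕ :=
  sInf {m | ∃ l : List (Equiv.Perm (Fin n)), l.length = m ∧
    (∀ s ∈ l, ∃ i j : Fin n, (i : ℕ) + 1 = (j : ℕ) ∧ s = Equiv.swap i j) ∧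
    g = f * l.prod}

/-- The factoradic representation (0-indexed): `phi f i` counts values smaller
than `i` that appear to the right of `i` in the one-line notation of `f`. -/
noncomputable def phi {n : ℕ} (f : Equiv.Perm (Fin n)) (i : Fin n) : ℕ :=
  Set.ncard {j : Fin n | j < i ∧ f⁻¹ i < f⁻¹ j}

/-- `projUp hk f` is `f|^{[k]}`: keep only the values `0,…,k-1` of `f` and
relabel them to `Fin k`, preserving relative order of positions. -/
noncomputable def projUp {n k : ℕ} (hk : k ≤ n) (f : Equiv.Perm (Fin n)) :
    Equiv.Perm (Fin k) := by
  classical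
  let g : Fin k → Fin n := fun b => f⁻¹ (Fin.castLE hk b)
  have hg : Function.Injective g :=
    fun a b hab => Fin.castLE_injective hk (f⁻¹.injective hab)
  let s : Finset (Fin n) := Finset.univ.image g
  have hs : s.card = k := by
    rw [Finset.card_image_of_injective _ hg, Finset.card_univ, Fintype.card_fin]
  have hr : Set.range g = ↑s := by ext x; simp [s, g]
  exact ((Equiv.ofInjective g hg).trans
    ((Equiv.setCongr hr).trans (s.orderIsoOfFin hs).toEquiv.symm)).symm

/-- `projDown hk g` is `g|_{[k]}`: keep only the first `k` coordinates of `g`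
and relabel the values to `Fin k`, preserving relative order. -/
noncomputable def projDown {n k : ℕ} (hk : k ≤ n) (g : Equiv.Perm (Fin n)) :
    Equiv.Perm (Fin k) :=
  (projUp hk g⁻¹)⁻¹

/-- The ℓ∞ distance between permutations. -/
def dinf {n : ℕ} (f g : Equiv.Perm (Fin n)) : ℕ :=
  Finset.univ.sup (fun i : Fin n => ((f i : ℤ) - (g i : ℤ)).natAbs)

/-!
Write `g = f s₁ ⋯ s_m` with `m = d_K(f, g)` adjacent transpositions and follow
`D(h) = d_K(f|^{[k]}, h|^{[k]}) + Σ_{v ≥ k} |Φ(f)_v - Φ(h)_v|` along the partial products;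
`D(f) = 0`, so it suffices that each letter raises `D` by at most one. Swapping two adjacent
positions holding the values `a, b` changes `Φ` only at `max a b`, and there by at most one.
If `a, b < k` this value is not counted, and `h|^{[k]}` changes by one adjacent transposition;
otherwise `h|^{[k]}` does not change.
-/

open Equiv

section Kendall

variable {n : ℕ}

def IsAdjacentSwap (s : Perm (Fin n)) : Prop :=
  ∃ i j : Fin n, (i : ℕ) + 1 = (j : ℕ) ∧ s = swap i j

lemma exists_list_isAdjacentSwap (f g : Perm (Fin n)) :
    ∃ l : List (Perm (Fin n)), (∀ s ∈ l, IsAdjacentSwap s) ∧ g = f * l.prod := by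
  cases n with
  | zero => exact ⟨[], by simp, Subsingleton.elim _ _⟩
  | succ n =>
    have hmem : f⁻¹ * g ∈
        Submonoid.closure (Set.range fun i : Fin n ↦ swap i.castSucc i.succ) := by
      rw [Perm.mclosure_swap_castSucc_succ]; trivial
    obtain ⟨l, hl, hprod⟩ := Submonoid.exists_list_of_mem_closure hmem
    refine ⟨l, fun s hs => ?_, by rw [hprod]; group⟩
    obtain ⟨i, rfl⟩ := hl s hs
    exact ⟨i.castSucc, i.succ, by simp, rfl⟩

lemma kendall_le_length {f g : Perm (Fin n)} (l : List (Perm (Fin n)))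
    (hl : ∀ s ∈ l, IsAdjacentSwap s) (hg : g = f * l.prod) : kendall f g ≤ l.length :=
  Nat.sInf_le ⟨l, rfl, hl, hg⟩

lemma exists_list_length_eq_kendall (f g : Perm (Fin n)) :
    ∃ l : List (Perm (Fin n)), l.length = kendall f g ∧
      (∀ s ∈ l, IsAdjacentSwap s) ∧ g = f * l.prod := by
  obtain ⟨l, hl, hg⟩ := exists_list_isAdjacentSwap f g
  exact Nat.sInf_mem (s := {m | ∃ l : List (Perm (Fin n)), l.length = m ∧
    (∀ s ∈ l, IsAdjacentSwap s) ∧ g = f * l.prod}) ⟨l.length, l, rfl, hl, hg⟩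

lemma kendall_self (f : Perm (Fin n)) : kendall f f = 0 :=
  Nat.le_zero.mp (kendall_le_length [] (by simp) (by simp))

lemma kendall_mul_le_one (f : Perm (Fin n)) {s : Perm (Fin n)} (hs : IsAdjacentSwap s) :
    kendall f (f * s) ≤ 1 :=
  kendall_le_length [s] (by simpa using hs) (by simp)

lemma kendall_triangle (f g h : Perm (Fin n)) : kendall f h ≤ kendall f g + kendall g h := by
  obtain ⟨l₁, hlen₁, hl₁, hg⟩ := exists_list_length_eq_kendall f g
  obtain ⟨l₂, hlen₂, hl₂, hh⟩ := exists_list_length_eq_kendall g h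
  calc kendall f h ≤ (l₁ ++ l₂).length :=
        kendall_le_length _ (by simpa [or_imp, forall_and] using ⟨hl₁, hl₂⟩)
          (by rw [List.prod_append, ← mul_assoc, ← hg, ← hh])
    _ = kendall f g + kendall g h := by simp [hlen₁, hlen₂]

theorem le_kendall_of_mul_le_add_one {D : Perm (Fin n) → ℕ} (f g : Perm (Fin n)) (hf : D f = 0)
    (hstep : ∀ h s, IsAdjacentSwap s → D (h * s) ≤ D h + 1) : D g ≤ kendall f g := by
  obtain ⟨l, hlen, hl, rfl⟩ := exists_list_length_eq_kendall f g
  rw [← hlen]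
  clear hlen
  induction l using List.reverseRecOn with
  | nil => simp [hf]
  | append_singleton l s ih =>
    have hprefix := ih fun t ht => hl t (by simp [ht])
    have hlast := hstep (f * l.prod) s (hl s (by simp))
    rw [List.prod_append, List.prod_singleton, ← mul_assoc, List.length_append,
      List.length_singleton]
    omega

end Kendall

section Order

variable {n : ℕ}

lemma swap_lt_swap_iff {i j x y : Fin n} (hij : (i : ℕ) + 1 = (j : ℕ))
    (hxy : ¬(x = i ∧ y = j)) (hyx : ¬(x = j ∧ y = i)) :
    swap i j x < swap i j y ↔ x < y := by
  rw [swap_apply_def, swap_apply_def]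
  simp only [Fin.ext_iff, not_and] at hxy hyx
  split_ifs <;> simp only [Fin.lt_def, Fin.ext_iff] at * <;> omega

lemma Equiv.Perm.eq_of_inv_lt_inv_iff {σ τ : Perm (Fin n)}
    (h : ∀ b b', σ⁻¹ b < σ⁻¹ b' ↔ τ⁻¹ b < τ⁻¹ b') : σ = τ := by
  have hmono : StrictMono (τ⁻¹ * σ) := fun x y hxy =>
    (h (σ x) (σ y)).1 (by simpa using hxy)
  have hid := congrArg RelIso.toEquiv
    (Subsingleton.elim (⟨τ⁻¹ * σ, hmono.le_iff_le⟩ : Fin n ≃o Fin n) (OrderIso.refl _))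
  exact (inv_mul_eq_one.mp hid).symm

end Order

section Phi

variable {n : ℕ} {i j : Fin n}

lemma phi_eq_card (h : Perm (Fin n)) (v : Fin n) :
    phi h v = #{w | w < v ∧ h⁻¹ v < h⁻¹ w} := by
  rw [phi, ← Set.ncard_coe_finset, coe_filter]
  congr 1
  ext
  simp

lemma mul_swap_inv_lt_iff (h : Perm (Fin n)) (hij : (i : ℕ) + 1 = (j : ℕ)) {v w : Fin n}
    (hwv : w < v) (hne : ¬(v = max (h i) (h j) ∧ w = min (h i) (h j))) :
    (h * swap i j)⁻¹ v < (h * swap i j)⁻¹ w ↔ h⁻¹ v < h⁻¹ w := by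
  rw [mul_inv_rev, swap_inv, Perm.mul_apply, Perm.mul_apply]
  refine swap_lt_swap_iff hij ?_ ?_ <;> rintro ⟨hv, hw⟩ <;> apply hne <;>
    rw [Perm.inv_eq_iff_eq] at hv hw <;> subst hv hw
  · exact ⟨(max_eq_left hwv.le).symm, (min_eq_right hwv.le).symm⟩
  · exact ⟨(max_eq_right hwv.le).symm, (min_eq_left hwv.le).symm⟩

lemma Finset.natAbs_card_sub_card_le_card_symmDiff {α : Type*} [DecidableEq α]
    (s t : Finset α) : ((#s : ℤ) - #t).natAbs ≤ #(symmDiff s t) := by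
  have hs := card_sdiff_add_card_inter s t
  have ht := card_sdiff_add_card_inter t s
  rw [inter_comm] at ht
  rw [symmDiff_def, sup_eq_union, card_union_of_disjoint disjoint_sdiff_sdiff]
  omega

lemma natAbs_phi_sub_phi_mul_swap_le (h : Perm (Fin n)) (hij : (i : ℕ) + 1 = (j : ℕ))
    (v : Fin n) :
    ((phi h v : ℤ) - phi (h * swap i j) v).natAbs ≤ if v = max (h i) (h j) then 1 else 0 := by
  rw [phi_eq_card, phi_eq_card]
  have hmem : ∀ w ∈ symmDiff ({w | w < v ∧ h⁻¹ v < h⁻¹ w} : Finset (Fin n))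
      ({w | w < v ∧ (h * swap i j)⁻¹ v < (h * swap i j)⁻¹ w} : Finset (Fin n)),
      v = max (h i) (h j) ∧ w = min (h i) (h j) := by
    intro w hw
    by_contra hne
    simp only [mem_symmDiff, mem_filter, mem_univ, true_and] at hw
    rcases hw with ⟨⟨hwv, hlt⟩, hnot⟩ | ⟨⟨hwv, hlt⟩, hnot⟩
    · exact hnot ⟨hwv, (mul_swap_inv_lt_iff h hij hwv hne).2 hlt⟩
    · exact hnot ⟨hwv, (mul_swap_inv_lt_iff h hij hwv hne).1 hlt⟩
  refine (natAbs_card_sub_card_le_card_symmDiff _ _).trans ?_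
  split_ifs with hv
  · exact card_le_one.2 fun a ha b hb => (hmem a ha).2.trans (hmem b hb).2.symm
  · exact (card_eq_zero.2 (eq_empty_of_forall_notMem fun w hw => hv (hmem w hw).1)).le

lemma sum_natAbs_phi_sub_phi_mul_swap_le (h : Perm (Fin n)) (hij : (i : ℕ) + 1 = (j : ℕ))
    (T : Finset (Fin n)) :
    ∑ v ∈ T, ((phi h v : ℤ) - phi (h * swap i j) v).natAbs
      ≤ if max (h i) (h j) ∈ T then 1 else 0 :=
  (sum_le_sum fun v _ => natAbs_phi_sub_phi_mul_swap_le h hij v).trans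
    (sum_ite_eq' T _ _).le

end Phi

section ProjUp

variable {n k : ℕ} (hk : k ≤ n)

lemma projUp_inv_lt_projUp_inv_iff (f : Perm (Fin n)) (b b' : Fin k) :
    (projUp hk f)⁻¹ b < (projUp hk f)⁻¹ b' ↔
      f⁻¹ (Fin.castLE hk b) < f⁻¹ (Fin.castLE hk b') := by
  simp only [projUp, Perm.inv_def, symm_symm, trans_apply]
  have hlt_iff (s : Finset (Fin n)) (hs : #s = k) (x y : s) :
      (s.orderIsoOfFin hs).toEquiv.symm x < (s.orderIsoOfFin hs).toEquiv.symm y ↔ x < y :=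
    (s.orderIsoOfFin hs).symm.lt_iff_lt
  exact hlt_iff _ _ _ _

lemma projUp_swap_mul (h : Perm (Fin n)) (A B : Fin k) :
    projUp hk (swap (Fin.castLE hk A) (Fin.castLE hk B) * h) = swap A B * projUp hk h := by
  refine Perm.eq_of_inv_lt_inv_iff fun b b' => ?_
  simp only [mul_inv_rev, swap_inv, Perm.mul_apply, projUp_inv_lt_projUp_inv_iff,
    (Fin.castLE_injective hk).swap_apply]

lemma projUp_inv_covBy (h : Perm (Fin n)) {A B : Fin k}
    (hAB : h⁻¹ (Fin.castLE hk A) ⋖ h⁻¹ (Fin.castLE hk B)) :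
    (projUp hk h)⁻¹ A ⋖ (projUp hk h)⁻¹ B := by
  refine ⟨(projUp_inv_lt_projUp_inv_iff hk h A B).2 hAB.lt, fun t hAt htB => ?_⟩
  rw [← (projUp hk h).symm_apply_apply t] at hAt htB
  exact hAB.2 ((projUp_inv_lt_projUp_inv_iff hk h _ _).1 hAt)
    ((projUp_inv_lt_projUp_inv_iff hk h _ _).1 htB)

variable {i j : Fin n}

lemma kendall_projUp_mul_swap_le_one (h : Perm (Fin n)) (hij : (i : ℕ) + 1 = (j : ℕ))
    (hi : (h i : ℕ) < k) (hj : (h j : ℕ) < k) :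
    kendall (projUp hk h) (projUp hk (h * swap i j)) ≤ 1 := by
  set A : Fin k := ⟨h i, hi⟩
  set B : Fin k := ⟨h j, hj⟩
  have hA : Fin.castLE hk A = h i := rfl
  have hB : Fin.castLE hk B = h j := rfl
  have hcov : ((projUp hk h)⁻¹ A : ℕ) + 1 = (projUp hk h)⁻¹ B := by
    have := projUp_inv_covBy hk h (A := A) (B := B) (by simpa [hA, hB, Fin.covBy_iff] using hij)
    simpa [Fin.covBy_iff] using this
  rw [mul_swap_eq_swap_mul, ← hA, ← hB, projUp_swap_mul, swap_mul_eq_mul_swap]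
  exact kendall_mul_le_one _ ⟨_, _, hcov, rfl⟩

lemma projUp_mul_swap_of_le (h : Perm (Fin n)) (hij : (i : ℕ) + 1 = (j : ℕ))
    (hij_le : k ≤ (h i : ℕ) ∨ k ≤ (h j : ℕ)) :
    projUp hk (h * swap i j) = projUp hk h := by
  have hlt : ∀ (b : Fin k) x, h⁻¹ (Fin.castLE hk b) = x → (h x : ℕ) < k := by
    rintro b x rfl
    simp
  refine Perm.eq_of_inv_lt_inv_iff fun b b' => ?_
  rw [projUp_inv_lt_projUp_inv_iff, projUp_inv_lt_projUp_inv_iff, mul_inv_rev, swap_inv,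
    Perm.mul_apply, Perm.mul_apply]
  refine swap_lt_swap_iff hij ?_ ?_ <;> rintro ⟨hb, hb'⟩ <;>
    have := hlt _ _ hb <;> have := hlt _ _ hb' <;> omega

end ProjUp

lemma kendall_projUp_mul_swap_add_sum_phi_le {n k : ℕ} (hk : k ≤ n) (h : Perm (Fin n))
    {i j : Fin n} (hij : (i : ℕ) + 1 = (j : ℕ)) :
    kendall (projUp hk h) (projUp hk (h * swap i j)) +
      ∑ v ∈ univ.filter (fun v : Fin n => k ≤ (v : ℕ)),
        ((phi h v : ℤ) - phi (h * swap i j) v).natAbs ≤ 1 := by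
  grw [sum_natAbs_phi_sub_phi_mul_swap_le h hij]
  by_cases hlt : (h i : ℕ) < k ∧ (h j : ℕ) < k
  · have hmax : max (h i) (h j) ∉ univ.filter (fun v : Fin n => k ≤ (v : ℕ)) := by
      simp [Fin.coe_max, hlt]
    rw [if_neg hmax, add_zero]
    exact kendall_projUp_mul_swap_le_one hk h hij hlt.1 hlt.2
  · rw [projUp_mul_swap_of_le hk h hij (by omega), kendall_self, zero_add]
    split_ifs <;> simp

theorem stmt1_general (n k : ℕ) (hk : k ≤ n) (f g : Equiv.Perm (Fin n)) :
    kendall (projUp hk f) (projUp hk g) +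
      ∑ i ∈ Finset.univ.filter (fun i : Fin n => k ≤ (i : ℕ)), ((phi f i : ℤ) - (phi g i : ℤ)).natAbs
      ≤ kendall f g := by
  refine le_kendall_of_mul_le_add_one (D := fun h => kendall (projUp hk f) (projUp hk h) +
    ∑ i ∈ univ.filter (fun i : Fin n => k ≤ (i : ℕ)), ((phi f i : ℤ) - phi h i).natAbs)
    f g (by simp [kendall_self]) ?_
  rintro h _ ⟨i, j, hij, rfl⟩
  have hkendall := kendall_triangle (projUp hk f) (projUp hk h) (projUp hk (h * swap i j))
  have hphi : ∑ v ∈ univ.filter (fun v : Fin n => k ≤ (v : ℕ)),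
        ((phi f v : ℤ) - phi (h * swap i j) v).natAbs ≤
      ∑ v ∈ univ.filter (fun v : Fin n => k ≤ (v : ℕ)), ((phi f v : ℤ) - phi h v).natAbs +
        ∑ v ∈ univ.filter (fun v : Fin n => k ≤ (v : ℕ)),
          ((phi h v : ℤ) - phi (h * swap i j) v).natAbs := by
    rw [← sum_add_distrib]
    exact sum_le_sum fun v _ => by omega
  have hstep := kendall_projUp_mul_swap_add_sum_phi_le hk h hij
  omega

/-- `d_K(f,g) ≥ d_K(f|^{[k]},g|^{[k]}) + Σ_{i>k} |Φ(f)_i − Φ(g)_i|`. -/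
theorem stmt1 (n k : ℕ) (hk1 : 1 ≤ k) (hk : k ≤ n) (f g : Equiv.Perm (Fin n)) :
    kendall (projUp hk f) (projUp hk g) +
      ∑ i ∈ Finset.univ.filter (fun i : Fin n => k ≤ (i : ℕ)), ((phi f i : ℤ) - (phi g i : ℤ)).natAbs
      ≤ kendall f g :=
  stmt1_general n k hk f g
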